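/- Let N ≥ 1 and define coefficients c^0 = 1, c^{i+1} = -s^{-1} q^{2(N-i-2)} c^{i} in ℚ(q,s). Then the vector w = ∑_{i=0}^{N-1} c^{i} · v_i ⊗ v_{N-1-i} satisfies (E ⊗ K + 1 ⊗ E)(w) = 0, where on each tensor factor E v_i = v_{i-1} (E v_0 = 0) and K v_i = s q^{-2i} v_i. -/

import Mathlib

noncomputable section

/-- The field `ℚ(q,s)` of rational functions in two variables. -/
abbrev F2 : Type := FractionRing (MvPolynomial (Fin 2) ℤ)

/-- The variable `q`. -/
def qv : F2 := algebraMap (MvPolynomial (Fin 2) ℤ) F2 (MvPolynomial.X 0)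

/-- The variable `s`. -/
def sv : F2 := algebraMap (MvPolynomial (Fin 2) ℤ) F2 (MvPolynomial.X 1)

/-- The coefficients `c^0 = 1`, `c^{i+1} = -s⁻¹ q^{2(N-i-2)} c^i`. -/
def c8 (N : ℕ) : ℕ → F2
  | 0 => 1
  | i + 1 => -sv⁻¹ * qv ^ (2 * ((N : ℤ) - (i : ℤ) - 2)) * c8 N i

/-- The vector `w = ∑_{i=0}^{N-1} c^i · v_i ⊗ v_{N-1-i}` in coordinates with
respect to the basis `v_a ⊗ v_b` of the tensor square. -/
def w8 (N : ℕ) : ℕ → ℕ → F2 :=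
  fun a b => if a ≤ N - 1 ∧ b = N - 1 - a then c8 N a else 0

/-! `w` lives on the antidiagonal `a + b = N - 1`, so the coefficient of `v_a ⊗ v_b` in
`(E ⊗ K + 1 ⊗ E)(w)` can only be nonzero when `a + b = N - 2`; there it is
`s q^{-2b} c^{a+1} + c^a` with `b = N - a - 2`, which vanishes by the recursion defining `c`. -/

theorem qv_ne_zero : qv ≠ 0 :=
  (map_ne_zero_iff _ (IsFractionRing.injective (MvPolynomial (Fin 2) ℤ) F2)).2
    (MvPolynomial.X_ne_zero 0)

theorem sv_ne_zero : sv ≠ 0 :=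
  (map_ne_zero_iff _ (IsFractionRing.injective (MvPolynomial (Fin 2) ℤ) F2)).2
    (MvPolynomial.X_ne_zero 1)

theorem c8_succ_relation (N i : ℕ) :
    sv * qv ^ (-2 * ((N : ℤ) - i - 2)) * c8 N (i + 1) + c8 N i = 0 := by
  have hq : qv ^ (-2 * ((N : ℤ) - i - 2)) * qv ^ (2 * ((N : ℤ) - i - 2)) = 1 := by
    rw [← zpow_add₀ qv_ne_zero]
    simp
  rw [c8]
  field_simp [sv_ne_zero]
  linear_combination (-c8 N i) * hq

/- For `N = 0` the truncated subtraction in `w8` puts `c8 0 0` at `(0, 0)`, off the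
antidiagonal `a + b + 1 = N`. -/
theorem w8_eq_ite {N : ℕ} (hN : 1 ≤ N) (a b : ℕ) :
    w8 N a b = if a + b + 1 = N then c8 N a else 0 := by
  unfold w8
  split_ifs <;> first | rfl | omega

/-- `(E ⊗ K + 1 ⊗ E)(w) = 0`: in coordinates, the coefficient of `v_a ⊗ v_b`
in `(E ⊗ K + 1 ⊗ E)(w)` is `s q^{-2b} w(a+1, b) + w(a, b+1)`, and it vanishes. -/
theorem coev_highest_weight (N : ℕ) (hN : 1 ≤ N) :
    ∀ a b : ℕ,
      sv * qv ^ (-2 * (b : ℤ)) * w8 N (a + 1) b + w8 N a (b + 1) = 0 := by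
  intro a b
  rw [w8_eq_ite hN, w8_eq_ite hN, show a + (b + 1) + 1 = a + 1 + b + 1 by ring]
  split_ifs with hab
  · have hb : (b : ℤ) = N - a - 2 := by omega
    rw [hb]
    exact c8_succ_relation N a
  · simp

end
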